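/- arXiv:1311.3521 — 2 statements merged into one kernel-verified Lean document; each statement's English description precedes it below -/
import Mathlib

section
/- Let P satisfy the hypotheses of the reverse Lipschitz estimate (Lipschitz, 0 ≤ ∂P/∂s ≤ R₀, 1/R₀ ≤ ∂P/∂z ≤ R₀ a.e.), z* < H, and let ρ⁻, ρ⁺ be the min/max minimizer functions and 𝔞(s) = inf{ z ∈ [z*,H] : ρ⁻(z) ≥ s }. Then for every s ∈ [ρ⁻(z*), ρ⁻(H)), one has s ∈ [ρ⁻(𝔞(s)), ρ⁺(𝔞(s))]; moreover if s ∈ [ρ⁻(z), ρ⁺(z)] for some z ∈ [z*, H), then 𝔞(s) = z. -/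
open MeasureTheory

/-- `e(s) = r0^4/(1-2 s r0²)²`. -/
noncomputable def eFun (r0 s : ℝ) : ℝ := r0 ^ 4 / (1 - 2 * s * r0 ^ 2) ^ 2

/-- `Π_P(ρ,z)`. -/
noncomputable def PiFun (r0 Ω : ℝ) (P : ℝ × ℝ → ℝ) (ρ z : ℝ) : ℝ :=
  ∫ s in (0 : ℝ)..ρ, (Ω ^ 2 * r0 ^ 2 / (2 * (1 - 2 * s * r0 ^ 2)) - P (s, z)) * eFun r0 s

/-- `Argmin Π_P(·,z)` over `[0, 1/(2r0²))`. -/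
noncomputable def ArgminPi (r0 Ω : ℝ) (P : ℝ × ℝ → ℝ) (z : ℝ) : Set ℝ :=
  {ρ ∈ Set.Ico (0 : ℝ) (1 / (2 * r0 ^ 2)) |
    ∀ ρ' ∈ Set.Ico (0 : ℝ) (1 / (2 * r0 ^ 2)), PiFun r0 Ω P ρ z ≤ PiFun r0 Ω P ρ' z}


/-!
For `z₁ < z₂` the difference `Π(·,z₁) - Π(·,z₂)` is the primitive of `(P(·,z₂) - P(·,z₁)) e`,
which is positive, so it is strictly increasing; comparing the two minimality inequalities then
shows that minimizers increase weakly with `z`. A common minimizer `ρ > 0` of two levels is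
impossible, since by Fermat's rule the integrand of `Π(·,z)` vanishes at `ρ` for both levels while
it strictly decreases in `z`. Beyond `z*` the minimizer `0` is excluded, so the intervals
`[ρ⁻(z), ρ⁺(z)]`, `z ∈ [z*, H]`, are strictly ordered. Since `Π` is jointly continuous, limits of
minimizers are minimizers; the one-sided limits of the monotone `ρ⁻` at `𝔞(s)` enclose `s` and
lie in `[ρ⁻(𝔞(s)), ρ⁺(𝔞(s))]`.
-/

open Set Filter Topology

theorem le_of_isMinOn_of_strictMonoOn_sub {α β : Type*} [LinearOrder α] [AddCommGroup β]
    [LinearOrder β] [IsOrderedAddMonoid β] {f g : α → β} {s : Set α} {x y : α}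
    (hx : x ∈ s) (hy : y ∈ s) (hfx : IsMinOn f s x) (hgy : IsMinOn g s y)
    (h : StrictMonoOn (f - g) s) : x ≤ y := by
  refine (h.le_iff_le hx hy).mp ?_
  have hf := isMinOn_iff.mp hfx y hy
  have hg := isMinOn_iff.mp hgy x hx
  simp only [Pi.sub_apply, sub_le_sub_iff]
  exact add_le_add hf hg

theorem continuousOn_parametric_primitive_of_continuousOn {E : Type*} [NormedAddCommGroup E]
    [NormedSpace ℝ E] {f : ℝ × ℝ → E} {a c u v : ℝ} (hac : a ≤ c) (huv : u ≤ v)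
    (hf : ContinuousOn f (Icc a c ×ˢ Icc u v)) :
    ContinuousOn (fun p : ℝ × ℝ => ∫ t in a..p.1, f (t, p.2)) (Icc a c ×ˢ Icc u v) := by
  -- extend `f` continuously to the whole plane by clamping both coordinates
  let F : ℝ × ℝ → ℝ → E := fun p t => f (projIcc a c hac t, projIcc u v huv p.2)
  have hF : Continuous F.uncurry :=
    hf.comp_continuous (by fun_prop) fun q => ⟨Subtype.mem _, Subtype.mem _⟩
  refine (intervalIntegral.continuous_parametric_intervalIntegral_of_continuous
    (μ := volume) (a₀ := a) hF continuous_fst).continuousOn.congr fun p hp => ?_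
  refine intervalIntegral.integral_congr fun t ht => ?_
  rw [uIcc_of_le hp.1.1] at ht
  simp only [F, projIcc_of_mem hac ⟨ht.1, ht.2.trans hp.1.2⟩, projIcc_of_mem huv hp.2]

theorem Real.eq_sSup_of_cases {T : Set ℝ} {x : ℝ} (hne : T.Nonempty → x = sSup T)
    (hempty : ¬T.Nonempty → x = 0) : x = sSup T := by
  rcases T.eq_empty_or_nonempty with hT | hT
  · rw [hempty (not_nonempty_iff_eq_empty.mpr hT), hT, Real.sSup_empty]
  · exact hne hT

structure StrictlyOrderedIntervals (ρm ρp : ℝ → ℝ) (Z : Set ℝ) : Prop where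
  le : ∀ z ∈ Z, ρm z ≤ ρp z
  lt : ∀ z₁ ∈ Z, ∀ z₂ ∈ Z, z₁ < z₂ → ρp z₁ < ρm z₂

theorem StrictlyOrderedIntervals.strictMonoOn {ρm ρp : ℝ → ℝ} {Z : Set ℝ}
    (h : StrictlyOrderedIntervals ρm ρp Z) : StrictMonoOn ρm Z :=
  fun z₁ h₁ z₂ h₂ hlt => (h.le z₁ h₁).trans_lt (h.lt z₁ h₁ z₂ h₂ hlt)

def LimitsMemIcc (ρm ρp : ℝ → ℝ) (Z : Set ℝ) : Prop :=
  ∀ a ∈ Z, ∀ r, ∀ l : Filter ℝ, l.NeBot → l ≤ 𝓝[Z] a → Tendsto ρm l (𝓝 r) →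
    r ∈ Icc (ρm a) (ρp a)

/-- The paper's `𝔞(s)`. -/
noncomputable def generalizedInverse (ρm : ℝ → ℝ) (zs H s : ℝ) : ℝ :=
  sInf {z | z ∈ Icc zs H ∧ s ≤ ρm z}

theorem generalizedInverse_mem_Icc {ρm : ℝ → ℝ} {zs H s : ℝ} (hzsH : zs ≤ H) (hs : s ≤ ρm H) :
    generalizedInverse ρm zs H s ∈ Icc zs H :=
  ⟨le_csInf ⟨H, ⟨hzsH, le_rfl⟩, hs⟩ fun _ hw => hw.1.1,
    csInf_le ⟨zs, fun _ hw => hw.1.1⟩ ⟨⟨hzsH, le_rfl⟩, hs⟩⟩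

namespace StrictlyOrderedIntervals

variable {ρm ρp : ℝ → ℝ} {zs H s : ℝ}

theorem lower_generalizedInverse_le (h : StrictlyOrderedIntervals ρm ρp (Icc zs H))
    (hclosed : LimitsMemIcc ρm ρp (Icc zs H))
    (hzsH : zs ≤ H) (hs : s ∈ Ico (ρm zs) (ρm H)) : ρm (generalizedInverse ρm zs H s) ≤ s := by
  set a := generalizedInverse ρm zs H s
  have haZ : a ∈ Icc zs H := generalizedInverse_mem_Icc hzsH hs.2.le
  rcases haZ.1.eq_or_lt with heq | hlt
  · exact heq ▸ hs.1
  have hsub : Ioo zs a ⊆ Icc zs H := fun w hw => ⟨hw.1.le, hw.2.le.trans haZ.2⟩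
  have hbelow : ∀ w ∈ Ioo zs a, ρm w ≤ s := fun w hw =>
    (lt_of_not_ge fun hsw => notMem_of_lt_csInf hw.2 ⟨zs, fun _ hv => hv.1.1⟩ ⟨hsub hw, hsw⟩).le
  have hlim := (h.strictMonoOn.monotoneOn.mono hsub).tendsto_nhdsWithin_Ioo_left
    (nonempty_Ioo.mpr hlt) ⟨s, forall_mem_image.mpr hbelow⟩
  have hl : 𝓝[<] a ≤ 𝓝[Icc zs H] a := nhdsWithin_Ioo_eq_nhdsLT hlt ▸ nhdsWithin_mono a hsub
  exact (hclosed a haZ _ _ inferInstance hl hlim).1.trans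
    (csSup_le ((nonempty_Ioo.mpr hlt).image ρm) (forall_mem_image.mpr hbelow))

theorem le_upper_generalizedInverse (h : StrictlyOrderedIntervals ρm ρp (Icc zs H))
    (hclosed : LimitsMemIcc ρm ρp (Icc zs H))
    (hzsH : zs ≤ H) (hs : s ∈ Ico (ρm zs) (ρm H)) : s ≤ ρp (generalizedInverse ρm zs H s) := by
  set a := generalizedInverse ρm zs H s
  have haZ : a ∈ Icc zs H := generalizedInverse_mem_Icc hzsH hs.2.le
  by_cases ha : s ≤ ρm a
  · exact ha.trans (h.le a haZ)
  have haH : a < H := haZ.2.lt_of_ne fun he => ha (he ▸ hs.2.le)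
  have hsub : Ioo a H ⊆ Icc zs H := fun w hw => ⟨haZ.1.trans hw.1.le, hw.2.le⟩
  have habove : ∀ w ∈ Ioo a H, s ≤ ρm w := fun w hw => by
    obtain ⟨v, hv, hvw⟩ := exists_lt_of_csInf_lt
      (s := {z | z ∈ Icc zs H ∧ s ≤ ρm z}) ⟨H, ⟨hzsH, le_rfl⟩, hs.2.le⟩ hw.1
    exact hv.2.trans (h.strictMonoOn.monotoneOn hv.1 (hsub hw) hvw.le)
  have hlim := (h.strictMonoOn.monotoneOn.mono hsub).tendsto_nhdsWithin_Ioo_right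
    (nonempty_Ioo.mpr haH) ⟨s, forall_mem_image.mpr habove⟩
  have hl : 𝓝[>] a ≤ 𝓝[Icc zs H] a := nhdsWithin_Ioo_eq_nhdsGT haH ▸ nhdsWithin_mono a hsub
  exact (le_csInf ((nonempty_Ioo.mpr haH).image ρm) (forall_mem_image.mpr habove)).trans
    (hclosed a haZ _ _ inferInstance hl hlim).2

theorem generalizedInverse_eq (h : StrictlyOrderedIntervals ρm ρp (Icc zs H)) {z : ℝ}
    (hz : z ∈ Ico zs H) (hs : s ∈ Icc (ρm z) (ρp z)) : generalizedInverse ρm zs H s = z := by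
  have hzZ : z ∈ Icc zs H := ⟨hz.1, hz.2.le⟩
  have hsub : Ioc z H ⊆ {w | w ∈ Icc zs H ∧ s ≤ ρm w} := fun w hw =>
    have hwZ : w ∈ Icc zs H := ⟨hz.1.trans hw.1.le, hw.2⟩
    ⟨hwZ, hs.2.trans (h.lt z hzZ w hwZ hw.1).le⟩
  have hlb : ∀ w ∈ {w | w ∈ Icc zs H ∧ s ≤ ρm w}, z ≤ w := fun w hw =>
    not_lt.mp fun hwz => (hw.2.trans (h.le w hw.1)).not_gt ((h.lt w hw.1 z hzZ hwz).trans_le hs.1)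
  exact le_antisymm
    ((csInf_le_csInf ⟨z, hlb⟩ (nonempty_Ioc.mpr hz.2) hsub).trans_eq (csInf_Ioc hz.2))
    (le_csInf ⟨H, hsub ⟨hz.2, le_rfl⟩⟩ hlb)

end StrictlyOrderedIntervals

local notation "𝕀" r0:max => Set.Ico (0 : ℝ) (1 / (2 * r0 ^ 2))

theorem one_sub_two_mul_pos {r0 s : ℝ} (hs : s < 1 / (2 * r0 ^ 2)) :
    0 < 1 - 2 * s * r0 ^ 2 := by
  rcases eq_or_ne r0 0 with rfl | hr0
  · norm_num
  · have := (lt_div_iff₀ (by positivity)).mp hs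
    linarith

theorem eFun_pos {r0 s : ℝ} (hr0 : r0 ≠ 0) (hs : s < 1 / (2 * r0 ^ 2)) : 0 < eFun r0 s := by
  have := one_sub_two_mul_pos hs
  unfold eFun
  positivity

noncomputable def piIntegrand (r0 Ω : ℝ) (P : ℝ × ℝ → ℝ) (p : ℝ × ℝ) : ℝ :=
  (Ω ^ 2 * r0 ^ 2 / (2 * (1 - 2 * p.1 * r0 ^ 2)) - P p) * eFun r0 p.1

section PiFun

variable {r0 Ω H : ℝ} {P : ℝ × ℝ → ℝ}

theorem piIntegrand_sub_piIntegrand (s z₁ z₂ : ℝ) :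
    piIntegrand r0 Ω P (s, z₁) - piIntegrand r0 Ω P (s, z₂) =
      (P (s, z₂) - P (s, z₁)) * eFun r0 s := by
  simp only [piIntegrand]
  ring

theorem piIntegrand_sub_pos (hr0 : r0 ≠ 0)
    (hPz : ∀ s ∈ 𝕀 r0, StrictMonoOn (fun z => P (s, z)) (Icc 0 H))
    {s z₁ z₂ : ℝ} (hs : s ∈ 𝕀 r0) (hz₁ : z₁ ∈ Icc 0 H)
    (hz₂ : z₂ ∈ Icc 0 H) (hlt : z₁ < z₂) :
    0 < piIntegrand r0 Ω P (s, z₁) - piIntegrand r0 Ω P (s, z₂) := by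
  rw [piIntegrand_sub_piIntegrand]
  exact mul_pos (sub_pos.mpr (hPz s hs hz₁ hz₂ hlt)) (eFun_pos hr0 hs.2)

theorem continuousOn_piIntegrand (hP : ContinuousOn P (𝕀 r0 ×ˢ Icc 0 H)) :
    ContinuousOn (piIntegrand r0 Ω P) (𝕀 r0 ×ˢ Icc 0 H) := by
  have hden : ∀ p ∈ 𝕀 r0 ×ˢ Icc 0 H, 0 < 1 - 2 * p.1 * r0 ^ 2 :=
    fun p hp => one_sub_two_mul_pos hp.1.2
  refine ((continuousOn_const.div (by fun_prop) fun p hp => ?_).sub hP).mul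
    (continuousOn_const.div (by fun_prop) fun p hp => ?_)
  · exact (mul_pos two_pos (hden p hp)).ne'
  · exact (pow_pos (hden p hp) 2).ne'

theorem continuousOn_piIntegrand_left
    (hP : ContinuousOn P (𝕀 r0 ×ˢ Icc 0 H)) {z : ℝ} (hz : z ∈ Icc 0 H) :
    ContinuousOn (fun s => piIntegrand r0 Ω P (s, z)) (𝕀 r0) :=
  (continuousOn_piIntegrand hP).comp (by fun_prop) fun _ hs => ⟨hs, hz⟩

theorem intervalIntegrable_piIntegrand
    (hP : ContinuousOn P (𝕀 r0 ×ˢ Icc 0 H)) {x y z : ℝ}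
    (hz : z ∈ Icc 0 H) (hx : x ∈ 𝕀 r0) (hy : y ∈ 𝕀 r0) :
    IntervalIntegrable (fun s => piIntegrand r0 Ω P (s, z)) volume x y :=
  ((continuousOn_piIntegrand_left hP hz).mono
    (ordConnected_Ico.uIcc_subset hx hy)).intervalIntegrable

theorem PiFun_sub_PiFun (hP : ContinuousOn P (𝕀 r0 ×ˢ Icc 0 H))
    {x y z : ℝ} (hz : z ∈ Icc 0 H) (hx : x ∈ 𝕀 r0)
    (hy : y ∈ 𝕀 r0) :
    PiFun r0 Ω P y z - PiFun r0 Ω P x z = ∫ s in x..y, piIntegrand r0 Ω P (s, z) := by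
  have h0 : (0 : ℝ) ∈ 𝕀 r0 := ⟨le_rfl, hx.1.trans_lt hx.2⟩
  exact intervalIntegral.integral_interval_sub_left
    (intervalIntegrable_piIntegrand hP hz h0 hy) (intervalIntegrable_piIntegrand hP hz h0 hx)

theorem continuousOn_PiFun (hP : ContinuousOn P (𝕀 r0 ×ˢ Icc 0 H)) :
    ContinuousOn (fun p : ℝ × ℝ => PiFun r0 Ω P p.1 p.2) (𝕀 r0 ×ˢ Icc 0 H) := by
  refine continuousOn_of_locally_continuousOn fun p hp => ?_
  obtain ⟨c, hpc, hc⟩ := exists_between hp.1.2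
  have hsub : Icc 0 c ×ˢ Icc 0 H ⊆ 𝕀 r0 ×ˢ Icc 0 H :=
    prod_mono (Icc_subset_Ico_right hc) subset_rfl
  refine ⟨Iio c ×ˢ univ, isOpen_Iio.prod isOpen_univ, ⟨hpc, trivial⟩, ?_⟩
  refine (continuousOn_parametric_primitive_of_continuousOn (hp.1.1.trans hpc.le)
    (hp.2.1.trans hp.2.2) ((continuousOn_piIntegrand hP).mono hsub)).mono ?_
  rintro q ⟨⟨⟨hq0, -⟩, hqz⟩, hqc, -⟩
  exact ⟨⟨hq0, le_of_lt hqc⟩, hqz⟩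

theorem mem_ArgminPi_iff {ρ z : ℝ} : ρ ∈ ArgminPi r0 Ω P z ↔
    ρ ∈ 𝕀 r0 ∧ IsMinOn (PiFun r0 Ω P · z) (𝕀 r0) ρ := by
  rw [isMinOn_iff]
  rfl

theorem piIntegrand_eq_zero_of_mem_ArgminPi
    (hP : ContinuousOn P (𝕀 r0 ×ˢ Icc 0 H)) {ρ z : ℝ} (hz : z ∈ Icc 0 H)
    (hρ : ρ ∈ ArgminPi r0 Ω P z) (hρ0 : 0 < ρ) : piIntegrand r0 Ω P (ρ, z) = 0 := by
  obtain ⟨hρI, hmin⟩ := mem_ArgminPi_iff.mp hρ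
  have hIρ : 𝕀 r0 ∈ 𝓝 ρ := Ico_mem_nhds hρ0 hρI.2
  have hIoo : Ioo 0 (1 / (2 * r0 ^ 2)) ∈ 𝓝 ρ := Ioo_mem_nhds hρ0 hρI.2
  have hcont := continuousOn_piIntegrand_left (Ω := Ω) hP hz
  have hderiv : HasDerivAt (PiFun r0 Ω P · z) (piIntegrand r0 Ω P (ρ, z)) ρ :=
    intervalIntegral.integral_hasDerivAt_right
      (intervalIntegrable_piIntegrand hP hz ⟨le_rfl, hρI.1.trans_lt hρI.2⟩ hρI)
      ((hcont.mono Ioo_subset_Ico_self).stronglyMeasurableAtFilter isOpen_Ioo ρ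
        (mem_of_mem_nhds hIoo))
      (hcont.continuousAt hIρ)
  exact (hmin.isLocalMin hIρ).hasDerivAt_eq_zero hderiv

theorem strictMonoOn_PiFun_sub (hr0 : r0 ≠ 0)
    (hP : ContinuousOn P (𝕀 r0 ×ˢ Icc 0 H))
    (hPz : ∀ s ∈ 𝕀 r0, StrictMonoOn (fun z => P (s, z)) (Icc 0 H))
    {z₁ z₂ : ℝ} (hz₁ : z₁ ∈ Icc 0 H) (hz₂ : z₂ ∈ Icc 0 H) (hlt : z₁ < z₂) :
    StrictMonoOn (fun ρ => PiFun r0 Ω P ρ z₁ - PiFun r0 Ω P ρ z₂) (𝕀 r0) := by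
  intro x hx y hy hxy
  rw [← sub_pos]
  have hsub : ∫ s in x..y, (piIntegrand r0 Ω P (s, z₁) - piIntegrand r0 Ω P (s, z₂)) =
      PiFun r0 Ω P y z₁ - PiFun r0 Ω P y z₂ - (PiFun r0 Ω P x z₁ - PiFun r0 Ω P x z₂) := by
    rw [intervalIntegral.integral_sub (intervalIntegrable_piIntegrand hP hz₁ hx hy)
      (intervalIntegrable_piIntegrand hP hz₂ hx hy), ← PiFun_sub_PiFun hP hz₁ hx hy,
      ← PiFun_sub_PiFun hP hz₂ hx hy]
    ring
  rw [← hsub]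
  refine intervalIntegral.intervalIntegral_pos_of_pos_on
    ((intervalIntegrable_piIntegrand hP hz₁ hx hy).sub
      (intervalIntegrable_piIntegrand hP hz₂ hx hy)) (fun s hs => ?_) hxy
  exact piIntegrand_sub_pos hr0 hPz ⟨hx.1.trans hs.1.le, hs.2.trans hy.2⟩ hz₁ hz₂ hlt

theorem le_of_mem_ArgminPi (hr0 : r0 ≠ 0)
    (hP : ContinuousOn P (𝕀 r0 ×ˢ Icc 0 H))
    (hPz : ∀ s ∈ 𝕀 r0, StrictMonoOn (fun z => P (s, z)) (Icc 0 H))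
    {z₁ z₂ ρ₁ ρ₂ : ℝ} (hz₁ : z₁ ∈ Icc 0 H) (hz₂ : z₂ ∈ Icc 0 H) (hlt : z₁ < z₂)
    (h₁ : ρ₁ ∈ ArgminPi r0 Ω P z₁) (h₂ : ρ₂ ∈ ArgminPi r0 Ω P z₂) : ρ₁ ≤ ρ₂ :=
  le_of_isMinOn_of_strictMonoOn_sub h₁.1 h₂.1 (mem_ArgminPi_iff.mp h₁).2
    (mem_ArgminPi_iff.mp h₂).2 (strictMonoOn_PiFun_sub hr0 hP hPz hz₁ hz₂ hlt)

theorem lt_of_mem_ArgminPi (hr0 : r0 ≠ 0)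
    (hP : ContinuousOn P (𝕀 r0 ×ˢ Icc 0 H))
    (hPz : ∀ s ∈ 𝕀 r0, StrictMonoOn (fun z => P (s, z)) (Icc 0 H))
    {z₁ z₂ ρ₁ ρ₂ : ℝ} (hz₁ : z₁ ∈ Icc 0 H) (hz₂ : z₂ ∈ Icc 0 H) (hlt : z₁ < z₂)
    (h₁ : ρ₁ ∈ ArgminPi r0 Ω P z₁) (h₂ : ρ₂ ∈ ArgminPi r0 Ω P z₂)
    (h0 : 0 ∉ ArgminPi r0 Ω P z₂) : ρ₁ < ρ₂ := by
  refine (le_of_mem_ArgminPi hr0 hP hPz hz₁ hz₂ hlt h₁ h₂).lt_of_ne ?_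
  rintro rfl
  have hpos : 0 < ρ₁ := h₁.1.1.lt_of_ne fun h => h0 (h ▸ h₂)
  have := piIntegrand_sub_pos (Ω := Ω) hr0 hPz h₁.1 hz₁ hz₂ hlt
  rw [piIntegrand_eq_zero_of_mem_ArgminPi hP hz₁ h₁ hpos,
    piIntegrand_eq_zero_of_mem_ArgminPi hP hz₂ h₂ hpos, sub_zero] at this
  exact this.false

theorem mem_ArgminPi_of_tendsto {ι : Type*} {l : Filter ι} [l.NeBot] {z ρ : ι → ℝ} {a r c : ℝ}
    (hP : ContinuousOn P (𝕀 r0 ×ˢ Icc 0 H)) (ha : a ∈ Icc 0 H)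
    (hc : c < 1 / (2 * r0 ^ 2))
    (hmem : ∀ᶠ i in l, z i ∈ Icc 0 H ∧ ρ i ∈ ArgminPi r0 Ω P (z i) ∧ ρ i ≤ c)
    (hz : Tendsto z l (𝓝 a)) (hρ : Tendsto ρ l (𝓝 r)) : r ∈ ArgminPi r0 Ω P a := by
  have hr : r ∈ 𝕀 r0 :=
    ⟨ge_of_tendsto hρ (hmem.mono fun i h => h.2.1.1.1),
      (le_of_tendsto hρ (hmem.mono fun i h => h.2.2)).trans_lt hc⟩
  refine ⟨hr, fun ρ' hρ' => ?_⟩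
  have hcont := continuousOn_PiFun (Ω := Ω) hP
  have hlim : Tendsto (fun i => PiFun r0 Ω P (ρ i) (z i)) l (𝓝 (PiFun r0 Ω P r a)) :=
    (hcont (r, a) ⟨hr, ha⟩).tendsto.comp <| tendsto_nhdsWithin_iff.mpr
      ⟨hρ.prodMk_nhds hz, hmem.mono fun i h => ⟨h.2.1.1, h.1⟩⟩
  have hlim' : Tendsto (fun i => PiFun r0 Ω P ρ' (z i)) l (𝓝 (PiFun r0 Ω P ρ' a)) :=
    (hcont (ρ', a) ⟨hρ', ha⟩).tendsto.comp <| tendsto_nhdsWithin_iff.mpr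
      ⟨tendsto_const_nhds.prodMk_nhds hz, hmem.mono fun i h => ⟨hρ', h.1⟩⟩
  exact le_of_tendsto_of_tendsto hlim hlim' (hmem.mono fun i h => h.2.1.2 ρ' hρ')

theorem limitsMemIcc_of_isLeast_of_isGreatest {ρm ρp : ℝ → ℝ} {Z : Set ℝ} {c : ℝ}
    (hP : ContinuousOn P (𝕀 r0 ×ˢ Icc 0 H))
    (hρm : ∀ z ∈ Icc 0 H, IsLeast (ArgminPi r0 Ω P z) (ρm z))
    (hρp : ∀ z ∈ Icc 0 H, IsGreatest (ArgminPi r0 Ω P z) (ρp z)) (hZ : Z ⊆ Icc 0 H)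
    (hc : c < 1 / (2 * r0 ^ 2)) (hbd : ∀ z ∈ Z, ρm z ≤ c) : LimitsMemIcc ρm ρp Z := by
  intro a ha r l _ hl hr
  have hra := mem_ArgminPi_of_tendsto (z := id) hP (hZ ha) hc
    (Eventually.mono (hl self_mem_nhdsWithin) fun z hz => ⟨hZ hz, (hρm z (hZ hz)).1, hbd z hz⟩)
    (hl.trans nhdsWithin_le_nhds) hr
  exact ⟨(hρm a (hZ ha)).2 hra, (hρp a (hZ ha)).2 hra⟩

end PiFun

theorem stmt12_general (r0 Ω H R0 : ℝ) (hr0 : 0 < r0) (hR0 : 0 < R0)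
    (P : ℝ × ℝ → ℝ)
    (hPLip : ∃ K : NNReal, LipschitzOnWith K P
      (Set.Ico (0 : ℝ) (1 / (2 * r0 ^ 2)) ×ˢ Set.Icc (0 : ℝ) H))
    (hPz : ∀ s ∈ Set.Ico (0 : ℝ) (1 / (2 * r0 ^ 2)), ∀ z₁ ∈ Set.Icc (0 : ℝ) H,
      ∀ z₂ ∈ Set.Icc (0 : ℝ) H, z₁ ≤ z₂ →
        (z₂ - z₁) / R0 ≤ P (s, z₂) - P (s, z₁) ∧ P (s, z₂) - P (s, z₁) ≤ R0 * (z₂ - z₁))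
    (zs : ℝ) (hzsH : zs < H)
    (hzs : ({z ∈ Set.Icc (0 : ℝ) H | (0 : ℝ) ∈ ArgminPi r0 Ω P z}.Nonempty →
        zs = sSup {z ∈ Set.Icc (0 : ℝ) H | (0 : ℝ) ∈ ArgminPi r0 Ω P z}) ∧
      (¬{z ∈ Set.Icc (0 : ℝ) H | (0 : ℝ) ∈ ArgminPi r0 Ω P z}.Nonempty → zs = 0))
    (ρm ρp : ℝ → ℝ)
    (hρm : ∀ z ∈ Set.Icc (0 : ℝ) H, IsLeast (ArgminPi r0 Ω P z) (ρm z))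
    (hρp : ∀ z ∈ Set.Icc (0 : ℝ) H, IsGreatest (ArgminPi r0 Ω P z) (ρp z)) :
    ∀ s ∈ Set.Ico (ρm zs) (ρm H),
      (sInf {z | z ∈ Set.Icc zs H ∧ s ≤ ρm z} ∈ Set.Icc zs H ∧
        s ∈ Set.Icc (ρm (sInf {z | z ∈ Set.Icc zs H ∧ s ≤ ρm z}))
          (ρp (sInf {z | z ∈ Set.Icc zs H ∧ s ≤ ρm z}))) ∧
      (∀ z ∈ Set.Ico zs H, s ∈ Set.Icc (ρm z) (ρp z) →
        sInf {z' | z' ∈ Set.Icc zs H ∧ s ≤ ρm z'} = z) := by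
  obtain ⟨K, hK⟩ := hPLip
  have hP := hK.continuousOn
  have hPmono : ∀ s ∈ 𝕀 r0, StrictMonoOn (fun z => P (s, z)) (Icc 0 H) :=
    fun s hs z₁ hz₁ z₂ hz₂ hlt => by
      linarith [(hPz s hs z₁ hz₁ z₂ hz₂ hlt.le).1, div_pos (sub_pos.mpr hlt) hR0]
  set T := {z ∈ Icc (0 : ℝ) H | (0 : ℝ) ∈ ArgminPi r0 Ω P z}
  have hzsT : zs = sSup T := Real.eq_sSup_of_cases hzs.1 hzs.2
  have hZ : Icc zs H ⊆ Icc 0 H :=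
    Icc_subset_Icc_left (hzsT ▸ Real.sSup_nonneg fun t ht => ht.1.1)
  have h0 : ∀ z ∈ Icc zs H, zs < z → 0 ∉ ArgminPi r0 Ω P z := fun z hz hlt h =>
    notMem_of_csSup_lt (s := T) (hzsT ▸ hlt) ⟨H, fun t ht => ht.1.2⟩ ⟨hZ hz, h⟩
  have hord : StrictlyOrderedIntervals ρm ρp (Icc zs H) :=
    ⟨fun z hz => (hρp z (hZ hz)).2 (hρm z (hZ hz)).1, fun z₁ h₁ z₂ h₂ hlt =>
      lt_of_mem_ArgminPi hr0.ne' hP hPmono (hZ h₁) (hZ h₂) hlt (hρp z₁ (hZ h₁)).1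
        (hρm z₂ (hZ h₂)).1 (h0 z₂ h₂ (h₁.1.trans_lt hlt))⟩
  have hclosed : LimitsMemIcc ρm ρp (Icc zs H) :=
    limitsMemIcc_of_isLeast_of_isGreatest hP hρm hρp hZ (hρm H (hZ ⟨hzsH.le, le_rfl⟩)).1.1.2
      fun z hz => hord.strictMonoOn.monotoneOn hz ⟨hzsH.le, le_rfl⟩ hz.2
  intro s hs
  exact ⟨⟨generalizedInverse_mem_Icc hzsH.le hs.2.le,
    hord.lower_generalizedInverse_le hclosed hzsH.le hs,
    hord.le_upper_generalizedInverse hclosed hzsH.le hs⟩,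
    fun z hz hsz => hord.generalizedInverse_eq hz hsz⟩

/-- with `ρ⁻, ρ⁺` the min/max minimizer functions and
`𝔞(s) = inf{ z ∈ [z*,H] : ρ⁻(z) ≥ s }`, for every `s ∈ [ρ⁻(z*), ρ⁻(H))` one has
`𝔞(s) ∈ [z*,H]` and `s ∈ [ρ⁻(𝔞(s)), ρ⁺(𝔞(s))]`; moreover if `s ∈ [ρ⁻(z), ρ⁺(z)]` for some
`z ∈ [z*, H)` then `𝔞(s) = z`. -/
theorem stmt12 (r0 Ω H R0 : ℝ) (hr0 : 0 < r0) (hΩ : 0 < Ω) (hH : 0 < H) (hR0 : 0 < R0)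
    (P : ℝ × ℝ → ℝ)
    (hPLip : ∃ K : NNReal, LipschitzOnWith K P
      (Set.Ico (0 : ℝ) (1 / (2 * r0 ^ 2)) ×ˢ Set.Icc (0 : ℝ) H))
    (hPs : ∀ z ∈ Set.Icc (0 : ℝ) H,
      MonotoneOn (fun s => P (s, z)) (Set.Ico (0 : ℝ) (1 / (2 * r0 ^ 2))) ∧
      LipschitzOnWith (Real.toNNReal R0) (fun s => P (s, z))
        (Set.Ico (0 : ℝ) (1 / (2 * r0 ^ 2))))
    (hPz : ∀ s ∈ Set.Ico (0 : ℝ) (1 / (2 * r0 ^ 2)), ∀ z₁ ∈ Set.Icc (0 : ℝ) H,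
      ∀ z₂ ∈ Set.Icc (0 : ℝ) H, z₁ ≤ z₂ →
        (z₂ - z₁) / R0 ≤ P (s, z₂) - P (s, z₁) ∧ P (s, z₂) - P (s, z₁) ≤ R0 * (z₂ - z₁))
    (zs : ℝ) (hzsH : zs < H)
    (hzs : ({z ∈ Set.Icc (0 : ℝ) H | (0 : ℝ) ∈ ArgminPi r0 Ω P z}.Nonempty →
        zs = sSup {z ∈ Set.Icc (0 : ℝ) H | (0 : ℝ) ∈ ArgminPi r0 Ω P z}) ∧
      (¬{z ∈ Set.Icc (0 : ℝ) H | (0 : ℝ) ∈ ArgminPi r0 Ω P z}.Nonempty → zs = 0))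
    (ρm ρp : ℝ → ℝ)
    (hρm : ∀ z ∈ Set.Icc (0 : ℝ) H, IsLeast (ArgminPi r0 Ω P z) (ρm z))
    (hρp : ∀ z ∈ Set.Icc (0 : ℝ) H, IsGreatest (ArgminPi r0 Ω P z) (ρp z)) :
    ∀ s ∈ Set.Ico (ρm zs) (ρm H),
      (sInf {z | z ∈ Set.Icc zs H ∧ s ≤ ρm z} ∈ Set.Icc zs H ∧
        s ∈ Set.Icc (ρm (sInf {z | z ∈ Set.Icc zs H ∧ s ≤ ρm z}))
          (ρp (sInf {z | z ∈ Set.Icc zs H ∧ s ≤ ρm z}))) ∧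
      (∀ z ∈ Set.Ico zs H, s ∈ Set.Icc (ρm z) (ρp z) →
        sInf {z' | z' ∈ Set.Icc zs H ∧ s ≤ ρm z'} = z) :=
  stmt12_general r0 Ω H R0 hr0 hR0 P hPLip hPz zs hzsH hzs ρm ρp hρm hρp
end

section
/- (Normalization bound on the additive constant.) Fix C₀ ∈ ℝ. There exists C₁ ∈ ℝ such that for any (P, Ψ) ∈ 𝒰₀ with P(0,0) = 0, any λ ∈ ℝ, and any Borel probability measure σ supported in [0,R₀]², if J[σ](Ψ + λ, P − λ) ≥ −C₀ then |λ| ≤ C₁. -/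
open MeasureTheory

/-- The domain `𝒟 = [0, 1/(2r0²)) × [0,H]`. -/
def Dom (r0 H : ℝ) : Set (ℝ × ℝ) := Set.Ico (0 : ℝ) (1 / (2 * r0 ^ 2)) ×ˢ Set.Icc (0 : ℝ) H

/-- `(P,Ψ) ∈ 𝒰₀`: conjugate pair with Fenchel–Young inequality. -/
def memU0 (r0 H : ℝ) (Δ : Set (ℝ × ℝ)) (P Ψ : ℝ × ℝ → ℝ) : Prop :=
  (∀ p ∈ Dom r0 H, P p = sSup ((fun q : ℝ × ℝ => p.1 * q.1 + p.2 * q.2 - Ψ q) '' Δ)) ∧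
  (∀ q : ℝ × ℝ, 0 ≤ q.1 → 0 ≤ q.2 →
    Ψ q = sSup ((fun p : ℝ × ℝ => p.1 * q.1 + p.2 * q.2 - P p) '' Dom r0 H)) ∧
  (∀ p ∈ Dom r0 H, ∀ q : ℝ × ℝ, 0 ≤ q.1 → 0 ≤ q.2 →
    p.1 * q.1 + p.2 * q.2 ≤ P p + Ψ q)

/-- `j(P)`. -/
noncomputable def jP (r0 Ω H : ℝ) (P : ℝ × ℝ → ℝ) : ℝ :=
  sInf {x : ℝ | ∃ ρt : ℝ → ℝ, Measurable ρt ∧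
    (∀ z, ρt z ∈ Set.Ico (0 : ℝ) (1 / (2 * r0 ^ 2))) ∧
    x = ∫ z in (0 : ℝ)..H, PiFun r0 Ω P (ρt z) z}

/-- `J[σ](Ψ,P)`. -/
noncomputable def Jfun (r0 Ω H : ℝ) (σ : Measure (ℝ × ℝ)) (Ψ P : ℝ × ℝ → ℝ) : ℝ :=
  (∫ q : ℝ × ℝ, (q.1 / (2 * r0 ^ 2) - Ω * Real.sqrt q.1 - Ψ q) ∂σ) + jP r0 Ω H P

/-!
Test the infimum defining `j` with constant densities `ρ̄`. Fenchel–Young at `p = 0` gives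
`Ψ ≥ 0` and, with `P(0,0) = 0`, `-1 ≤ P ≤ R₀H₀` on `𝒟`; the sup formulas of `𝒰₀` also make `P`
and `Ψ` lower semicontinuous, so they agree on `𝒟` (resp. the quadrant) with measurable functions
and all integrals in `J` are genuine. With `ρ̄ = 0` we get `j(P - λ) ≤ 0`, hence
`J ≤ R₀/(2r0²) - λ`, an upper bound on `λ`. With `ρ̄` close to `1/(2r0²)`, comparison with the
constant `-1 - λ` gives `H Π_{P-λ}(ρ̄, z) ≤ H Π_0(ρ̄, z) + 2(1 + λ)`, hence `J ≤ const + λ`, a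
lower bound on `λ`. Boundedness of `Π` from below in `ρ`, needed for the infimum to be finite, comes
from completing the square in its closed form for constant `P`.
-/

noncomputable def piPrimitive (r0 Ω C s : ℝ) : ℝ :=
  Ω ^ 2 * r0 ^ 4 / (8 * (1 - 2 * s * r0 ^ 2) ^ 2) - C * r0 ^ 2 / (2 * (1 - 2 * s * r0 ^ 2))

lemma hasDerivAt_piPrimitive (r0 Ω C : ℝ) {s : ℝ} (hs : 1 - 2 * s * r0 ^ 2 ≠ 0) :
    HasDerivAt (piPrimitive r0 Ω C)
      ((Ω ^ 2 * r0 ^ 2 / (2 * (1 - 2 * s * r0 ^ 2)) - C) * eFun r0 s) s := by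
  have hu : HasDerivAt (fun x : ℝ => 1 - 2 * x * r0 ^ 2) (-(2 * r0 ^ 2)) s := by
    simpa using (((hasDerivAt_id' s).const_mul 2).mul_const (r0 ^ 2)).const_sub 1
  have h := ((hasDerivAt_const s (Ω ^ 2 * r0 ^ 4)).div ((hu.pow 2).const_mul 8)
    (by simpa using hs)).sub ((hasDerivAt_const s (C * r0 ^ 2)).div (hu.const_mul 2)
    (by simpa using hs))
  refine h.congr_deriv ?_
  simp only [eFun, Pi.pow_apply]
  field_simp
  ring

lemma one_sub_pos_of_mem_uIcc {r0 ρ s : ℝ} (hρ : 2 * ρ * r0 ^ 2 < 1)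
    (hs : s ∈ Set.uIcc 0 ρ) : 0 < 1 - 2 * s * r0 ^ 2 := by
  rcases Set.mem_uIcc.1 hs with ⟨h0, hρs⟩ | ⟨hρs, h0⟩ <;> nlinarith [sq_nonneg r0]

lemma continuousOn_const_div_one_sub {r0 ρ : ℝ} (hρ : 2 * ρ * r0 ^ 2 < 1) (a : ℝ) :
    ContinuousOn (fun s => a / (2 * (1 - 2 * s * r0 ^ 2))) (Set.uIcc 0 ρ) :=
  continuousOn_const.div (by fun_prop) fun s hs =>
    (mul_pos two_pos (one_sub_pos_of_mem_uIcc hρ hs)).ne'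

lemma continuousOn_eFun {r0 ρ : ℝ} (hρ : 2 * ρ * r0 ^ 2 < 1) :
    ContinuousOn (eFun r0) (Set.uIcc 0 ρ) :=
  continuousOn_const.div (by fun_prop) fun s hs =>
    pow_ne_zero 2 (one_sub_pos_of_mem_uIcc hρ hs).ne'

lemma PiFun_const (r0 Ω C z : ℝ) {ρ : ℝ} (hρ : 2 * ρ * r0 ^ 2 < 1) :
    PiFun r0 Ω (fun _ => C) ρ z = piPrimitive r0 Ω C ρ - piPrimitive r0 Ω C 0 :=
  intervalIntegral.integral_eq_sub_of_hasDerivAt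
    (fun _ hs => hasDerivAt_piPrimitive r0 Ω C (one_sub_pos_of_mem_uIcc hρ hs).ne')
    (((continuousOn_const_div_one_sub hρ _).sub continuousOn_const).mul
      (continuousOn_eFun hρ)).intervalIntegrable

lemma neg_sq_div_le_piPrimitive (r0 C s : ℝ) {Ω : ℝ} (hΩ : Ω ≠ 0) :
    -(C ^ 2 / (2 * Ω ^ 2)) ≤ piPrimitive r0 Ω C s := by
  set t := (1 - 2 * s * r0 ^ 2)⁻¹
  have ht : piPrimitive r0 Ω C s = Ω ^ 2 * r0 ^ 4 / 8 * t ^ 2 - C * r0 ^ 2 / 2 * t := by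
    simp only [piPrimitive, t, div_eq_mul_inv, mul_inv, inv_pow]; ring
  have hsq : 0 ≤ (Ω ^ 2 * r0 ^ 2 * t - 2 * C) ^ 2 / (8 * Ω ^ 2) := by positivity
  rw [ht, neg_le_iff_add_nonneg]
  convert hsq using 1
  field_simp
  ring

lemma eFun_nonneg (r0 s : ℝ) : 0 ≤ eFun r0 s := by
  unfold eFun; positivity

lemma two_mul_mul_sq_lt_one {r0 ρ : ℝ} (hρ : ρ < 1 / (2 * r0 ^ 2)) : 2 * ρ * r0 ^ 2 < 1 := by
  rcases eq_or_ne r0 0 with rfl | hr0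
  · norm_num
  · have := (lt_div_iff₀ (by positivity : (0 : ℝ) < 2 * r0 ^ 2)).1 hρ
    linarith

section BoundedMeasurable

variable {r0 Ω : ℝ} {P : ℝ × ℝ → ℝ} {a b : ℝ}

lemma intervalIntegrable_piIntegrand_s17 (hP : Measurable P) (ha : ∀ p, a ≤ P p)
    (hb : ∀ p, P p ≤ b) {ρ : ℝ} (hρ : 2 * ρ * r0 ^ 2 < 1) (z : ℝ) :
    IntervalIntegrable (fun s => (Ω ^ 2 * r0 ^ 2 / (2 * (1 - 2 * s * r0 ^ 2)) - P (s, z))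
      * eFun r0 s) volume 0 ρ := by
  have hPz : IntervalIntegrable (fun s => P (s, z)) volume 0 ρ :=
    (intervalIntegrable_const (c := max |a| |b|)).mono_fun'
      (hP.comp measurable_prodMk_right).aestronglyMeasurable
      (ae_of_all _ fun s => abs_le_max_abs_abs (ha _) (hb _))
  exact (((continuousOn_const_div_one_sub hρ _).intervalIntegrable).sub hPz).mul_continuousOn
    (continuousOn_eFun hρ)

lemma PiFun_le_PiFun_const (hP : Measurable P) (ha : ∀ p, a ≤ P p) (hb : ∀ p, P p ≤ b)
    {ρ : ℝ} (hρ0 : 0 ≤ ρ) (hρ : 2 * ρ * r0 ^ 2 < 1) (z : ℝ) :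
    PiFun r0 Ω P ρ z ≤ PiFun r0 Ω (fun _ => a) ρ z :=
  intervalIntegral.integral_mono_on hρ0 (intervalIntegrable_piIntegrand_s17 hP ha hb hρ z)
    (intervalIntegrable_piIntegrand_s17 measurable_const (fun _ => le_rfl) (fun _ => le_rfl) hρ z)
    fun s _ => mul_le_mul_of_nonneg_right (by linarith [ha (s, z)]) (eFun_nonneg r0 s)

lemma PiFun_const_le_PiFun (hP : Measurable P) (ha : ∀ p, a ≤ P p) (hb : ∀ p, P p ≤ b)
    {ρ : ℝ} (hρ0 : 0 ≤ ρ) (hρ : 2 * ρ * r0 ^ 2 < 1) (z : ℝ) :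
    PiFun r0 Ω (fun _ => b) ρ z ≤ PiFun r0 Ω P ρ z :=
  intervalIntegral.integral_mono_on hρ0
    (intervalIntegrable_piIntegrand_s17 measurable_const (fun _ => le_rfl) (fun _ => le_rfl) hρ z)
    (intervalIntegrable_piIntegrand_s17 hP ha hb hρ z)
    fun s _ => mul_le_mul_of_nonneg_right (by linarith [hb (s, z)]) (eFun_nonneg r0 s)

lemma measurable_PiFun (hP : Measurable P) (ρ : ℝ) :
    Measurable fun z => PiFun r0 Ω P ρ z := by
  have hF : StronglyMeasurable fun sz : ℝ × ℝ =>
      (Ω ^ 2 * r0 ^ 2 / (2 * (1 - 2 * sz.1 * r0 ^ 2)) - P sz) * eFun r0 sz.1 := by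
    unfold eFun
    exact Measurable.stronglyMeasurable (by fun_prop)
  exact ((hF.integral_prod_left' (μ := volume.restrict (Set.Ioc 0 ρ))).sub
    (hF.integral_prod_left' (μ := volume.restrict (Set.Ioc ρ 0)))).measurable

lemma intervalIntegrable_PiFun (hP : Measurable P) (ha : ∀ p, a ≤ P p) (hb : ∀ p, P p ≤ b)
    {ρ : ℝ} (hρ0 : 0 ≤ ρ) (hρ : 2 * ρ * r0 ^ 2 < 1) (H : ℝ) :
    IntervalIntegrable (fun z => PiFun r0 Ω P ρ z) volume 0 H :=
  (intervalIntegrable_const (c := max |PiFun r0 Ω (fun _ => b) ρ 0|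
      |PiFun r0 Ω (fun _ => a) ρ 0|)).mono_fun'
    (measurable_PiFun hP ρ).aestronglyMeasurable
    (ae_of_all _ fun z => abs_le_max_abs_abs (PiFun_const_le_PiFun hP ha hb hρ0 hρ z)
      (PiFun_le_PiFun_const hP ha hb hρ0 hρ z))

end BoundedMeasurable

lemma PiFun_ge (r0 : ℝ) {Ω : ℝ} (hΩ : Ω ≠ 0) {P : ℝ × ℝ → ℝ} {a b : ℝ} (hP : Measurable P)
    (ha : ∀ p, a ≤ P p) (hb : ∀ p, P p ≤ b) {ρ : ℝ} (hρ0 : 0 ≤ ρ) (hρ : 2 * ρ * r0 ^ 2 < 1)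
    (z : ℝ) : -(b ^ 2 / (2 * Ω ^ 2)) - piPrimitive r0 Ω b 0 ≤ PiFun r0 Ω P ρ z := by
  have h := PiFun_const_le_PiFun (Ω := Ω) hP ha hb hρ0 hρ z
  rw [PiFun_const r0 Ω b z hρ] at h
  linarith [neg_sq_div_le_piPrimitive r0 b ρ hΩ]

lemma jP_le_mul_PiFun_const {r0 Ω H : ℝ} (hΩ : Ω ≠ 0) (hH : 0 ≤ H) {P : ℝ × ℝ → ℝ} {a b : ℝ}
    (hP : Measurable P) (ha : ∀ p, a ≤ P p) (hb : ∀ p, P p ≤ b) {ρ : ℝ}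
    (hρ : ρ ∈ Set.Ico 0 (1 / (2 * r0 ^ 2))) :
    jP r0 Ω H P ≤ H * PiFun r0 Ω (fun _ => a) ρ 0 := by
  set L := -(b ^ 2 / (2 * Ω ^ 2)) - piPrimitive r0 Ω b 0
  have hbdd : BddBelow {x : ℝ | ∃ ρt : ℝ → ℝ, Measurable ρt ∧
      (∀ z, ρt z ∈ Set.Ico (0 : ℝ) (1 / (2 * r0 ^ 2))) ∧
      x = ∫ z in (0 : ℝ)..H, PiFun r0 Ω P (ρt z) z} := by
    refine ⟨min (H * L) 0, ?_⟩
    rintro _ ⟨ρt, -, hρt, rfl⟩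
    by_cases hint : IntervalIntegrable (fun z => PiFun r0 Ω P (ρt z) z) volume 0 H
    · have h := intervalIntegral.integral_mono_on hH intervalIntegrable_const hint
        fun z _ => PiFun_ge r0 hΩ hP ha hb (hρt z).1 (two_mul_mul_sq_lt_one (hρt z).2) z
      rw [intervalIntegral.integral_const, sub_zero, smul_eq_mul] at h
      exact min_le_of_left_le h
    · rw [intervalIntegral.integral_undef hint]
      exact min_le_right _ _
  have hρ1 := two_mul_mul_sq_lt_one hρ.2
  calc jP r0 Ω H P ≤ ∫ z in (0 : ℝ)..H, PiFun r0 Ω P ρ z :=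
        csInf_le hbdd ⟨fun _ => ρ, measurable_const, fun _ => hρ, rfl⟩
    _ ≤ ∫ _ in (0 : ℝ)..H, PiFun r0 Ω (fun _ => a) ρ 0 :=
        intervalIntegral.integral_mono_on hH (intervalIntegrable_PiFun hP ha hb hρ.1 hρ1 H)
          intervalIntegrable_const fun z _ => PiFun_le_PiFun_const hP ha hb hρ.1 hρ1 z
    _ = H * PiFun r0 Ω (fun _ => a) ρ 0 := by simp

lemma jP_congr {r0 Ω H : ℝ} (hH : 0 ≤ H) {P Q : ℝ × ℝ → ℝ}
    (hPQ : ∀ p ∈ Dom r0 H, P p = Q p) : jP r0 Ω H P = jP r0 Ω H Q := by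
  unfold jP
  congr 1
  ext x
  refine exists_congr fun ρt => and_congr_right fun _ => and_congr_right fun hρt => ?_
  rw [intervalIntegral.integral_congr fun z hz => ?_]
  rw [Set.uIcc_of_le hH] at hz
  refine intervalIntegral.integral_congr fun s hs => ?_
  rw [Set.uIcc_of_le (hρt z).1] at hs
  simp only [hPQ (s, z) ⟨⟨hs.1, hs.2.trans_lt (hρt z).2⟩, hz⟩]

lemma lowerSemicontinuous_sSup_image {ι X : Type*} [TopologicalSpace X] (S : Set ι)
    {f : ι → X → ℝ} (hf : ∀ i, Continuous (f i)) (hbdd : ∀ x, BddAbove ((f · x) '' S)) :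
    LowerSemicontinuous fun x => sSup ((f · x) '' S) := by
  simp only [Set.image_eq_range] at hbdd ⊢
  exact lowerSemicontinuous_ciSup hbdd fun i => (hf i).lowerSemicontinuous

lemma mul_add_mul_le_of_bounds {x₁ x₂ y₁ y₂ A B : ℝ} (h₁ : 0 ≤ x₁) (h₁' : x₁ ≤ A)
    (h₂ : 0 ≤ x₂) (h₂' : x₂ ≤ B) : x₁ * y₁ + x₂ * y₂ ≤ A * |y₁| + B * |y₂| := by
  nlinarith [abs_nonneg y₁, abs_nonneg y₂, le_abs_self y₁, le_abs_self y₂]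

section U0

variable {r0 H R0 : ℝ} {Δ : Set (ℝ × ℝ)} {P Ψ : ℝ × ℝ → ℝ}

lemma zero_mem_Dom (hr0 : r0 ≠ 0) (hH : 0 ≤ H) : ((0 : ℝ), (0 : ℝ)) ∈ Dom r0 H :=
  ⟨⟨le_rfl, by positivity⟩, le_rfl, hH⟩

lemma mul_add_mul_le_of_mem_Dom {p q : ℝ × ℝ} (hp : p ∈ Dom r0 H)
    (hq : q ∈ Set.Icc (0, 0) (R0, R0)) :
    p.1 * q.1 + p.2 * q.2 ≤ R0 * (1 / (2 * r0 ^ 2) + H) := by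
  obtain ⟨⟨hp1, hp1'⟩, hp2, hp2'⟩ := hp
  obtain ⟨⟨hq1, hq2⟩, hq1', hq2'⟩ := hq
  nlinarith [mul_le_mul hp1'.le hq1' hq1 (hp1.trans hp1'.le), mul_le_mul hp2' hq2' hq2 (hp2.trans hp2')]

lemma memU0.psi_nonneg (hU : memU0 r0 H Δ P Ψ) (hP0 : P (0, 0) = 0) (hr0 : r0 ≠ 0)
    (hH : 0 ≤ H) {q : ℝ × ℝ} (hq1 : 0 ≤ q.1) (hq2 : 0 ≤ q.2) : 0 ≤ Ψ q := by
  simpa [hP0] using hU.2.2 _ (zero_mem_Dom hr0 hH) q hq1 hq2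

lemma memU0.mem_upperBounds (hU : memU0 r0 H Δ P Ψ) (hP0 : P (0, 0) = 0) (hr0 : r0 ≠ 0)
    (hH : 0 ≤ H) (hΔ : Δ ⊆ Set.Icc (0, 0) (R0, R0)) {p : ℝ × ℝ} (hp : p ∈ Dom r0 H) :
    R0 * (1 / (2 * r0 ^ 2) + H) ∈
      upperBounds ((fun q : ℝ × ℝ => p.1 * q.1 + p.2 * q.2 - Ψ q) '' Δ) := by
  rintro _ ⟨q, hq, rfl⟩
  linarith [mul_add_mul_le_of_mem_Dom hp (hΔ hq), hU.psi_nonneg hP0 hr0 hH (hΔ hq).1.1 (hΔ hq).1.2]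

lemma memU0.P_le (hU : memU0 r0 H Δ P Ψ) (hP0 : P (0, 0) = 0) (hr0 : r0 ≠ 0) (hH : 0 ≤ H)
    (hΔ : Δ ⊆ Set.Icc (0, 0) (R0, R0)) (hΔne : Δ.Nonempty) {p : ℝ × ℝ} (hp : p ∈ Dom r0 H) :
    P p ≤ R0 * (1 / (2 * r0 ^ 2) + H) := by
  rw [hU.1 p hp]
  exact csSup_le (hΔne.image _) (hU.mem_upperBounds hP0 hr0 hH hΔ hp)

lemma memU0.exists_psi_lt_one (hU : memU0 r0 H Δ P Ψ) (hP0 : P (0, 0) = 0) (hr0 : r0 ≠ 0)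
    (hH : 0 ≤ H) (hΔne : Δ.Nonempty) : ∃ q ∈ Δ, Ψ q < 1 := by
  have h00 := hU.1 _ (zero_mem_Dom hr0 hH)
  rw [hP0] at h00
  obtain ⟨_, ⟨q, hq, rfl⟩, hlt⟩ := exists_lt_of_lt_csSup (hΔne.image _)
    (by rw [← h00]; norm_num : (-1 : ℝ) < sSup _)
  exact ⟨q, hq, by simp only [zero_mul, add_zero, zero_sub] at hlt; linarith⟩

lemma memU0.neg_one_le_P (hU : memU0 r0 H Δ P Ψ) (hP0 : P (0, 0) = 0) (hr0 : r0 ≠ 0)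
    (hH : 0 ≤ H) (hΔ : Δ ⊆ Set.Icc (0, 0) (R0, R0)) (hΔne : Δ.Nonempty) {p : ℝ × ℝ}
    (hp : p ∈ Dom r0 H) : -1 ≤ P p := by
  obtain ⟨q, hq, hΨq⟩ := hU.exists_psi_lt_one hP0 hr0 hH hΔne
  rw [hU.1 p hp]
  refine le_trans ?_ (le_csSup ⟨_, hU.mem_upperBounds hP0 hr0 hH hΔ hp⟩ ⟨q, hq, rfl⟩)
  have := mul_nonneg hp.1.1 (hΔ hq).1.1
  have := mul_nonneg hp.2.1 (hΔ hq).1.2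
  linarith

lemma memU0.exists_measurable_eqOn_Dom (hU : memU0 r0 H Δ P Ψ) (hP0 : P (0, 0) = 0)
    (hr0 : r0 ≠ 0) (hH : 0 ≤ H) (hΔ : Δ ⊆ Set.Icc (0, 0) (R0, R0)) (hΔne : Δ.Nonempty) :
    ∃ Q : ℝ × ℝ → ℝ, Measurable Q ∧ (∀ p, -1 ≤ Q p) ∧
      (∀ p, Q p ≤ R0 * (1 / (2 * r0 ^ 2) + H)) ∧ ∀ p ∈ Dom r0 H, P p = Q p := by
  have hlsc := lowerSemicontinuous_sSup_image Δ
    (f := fun q p : ℝ × ℝ => p.1 * q.1 + p.2 * q.2 - Ψ q) (fun _ => by fun_prop) fun p =>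
      ⟨R0 * |p.1| + R0 * |p.2|, by
        rintro _ ⟨q, hq, rfl⟩
        obtain ⟨⟨hq1, hq2⟩, hq1', hq2'⟩ := hΔ hq
        linarith [mul_add_mul_le_of_bounds (y₁ := p.1) (y₂ := p.2) hq1 hq1' hq2 hq2',
          hU.psi_nonneg hP0 hr0 hH hq1 hq2, mul_comm p.1 q.1, mul_comm p.2 q.2]⟩
  refine ⟨fun p => max (-1) (min (R0 * (1 / (2 * r0 ^ 2) + H)) (sSup _)),
    measurable_const.max (measurable_const.min hlsc.measurable), fun p => le_max_left _ _,
    fun p => max_le (by linarith [hU.P_le hP0 hr0 hH hΔ hΔne (zero_mem_Dom hr0 hH)])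
      (min_le_left _ _), fun p hp => ?_⟩
  simp only
  rw [← hU.1 p hp, min_eq_right (hU.P_le hP0 hr0 hH hΔ hΔne hp),
    max_eq_right (hU.neg_one_le_P hP0 hr0 hH hΔ hΔne hp)]

lemma memU0.exists_measurable_eqOn_psi (hU : memU0 r0 H Δ P Ψ) (hP0 : P (0, 0) = 0)
    (hr0 : r0 ≠ 0) (hH : 0 ≤ H) (hΔ : Δ ⊆ Set.Icc (0, 0) (R0, R0)) (hΔne : Δ.Nonempty) :
    ∃ Ψ' : ℝ × ℝ → ℝ, Measurable Ψ' ∧ ∀ q : ℝ × ℝ, 0 ≤ q.1 → 0 ≤ q.2 → Ψ q = Ψ' q :=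
  ⟨_, (lowerSemicontinuous_sSup_image (Dom r0 H)
    (f := fun p q : ℝ × ℝ => p.1 * q.1 + p.2 * q.2 - P p) (fun _ => by fun_prop) fun q =>
      ⟨1 / (2 * r0 ^ 2) * |q.1| + H * |q.2| + 1, by
        rintro _ ⟨p, hp, rfl⟩
        linarith [mul_add_mul_le_of_bounds (y₁ := q.1) (y₂ := q.2) hp.1.1 hp.1.2.le hp.2.1 hp.2.2,
          hU.neg_one_le_P hP0 hr0 hH hΔ hΔne hp]⟩).measurable, hU.2.1⟩

lemma memU0.psi_le (hU : memU0 r0 H Δ P Ψ) (hP0 : P (0, 0) = 0) (hr0 : r0 ≠ 0) (hH : 0 ≤ H)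
    (hΔ : Δ ⊆ Set.Icc (0, 0) (R0, R0)) (hΔne : Δ.Nonempty) {q : ℝ × ℝ}
    (hq : q ∈ Set.Icc (0, 0) (R0, R0)) : Ψ q ≤ R0 * (1 / (2 * r0 ^ 2) + H) + 1 := by
  rw [hU.2.1 q hq.1.1 hq.1.2]
  refine csSup_le (Set.Nonempty.image _ ⟨_, zero_mem_Dom hr0 hH⟩) ?_
  rintro _ ⟨p, hp, rfl⟩
  linarith [mul_add_mul_le_of_mem_Dom hp hq, hU.neg_one_le_P hP0 hr0 hH hΔ hΔne hp]

end U0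

lemma integral_le_of_ae_le {α : Type*} [MeasurableSpace α] {μ : Measure α}
    [IsProbabilityMeasure μ] {f : α → ℝ} {M c : ℝ} (hf : AEStronglyMeasurable f μ)
    (hM : ∀ᵐ x ∂μ, |f x| ≤ M) (hc : ∀ᵐ x ∂μ, f x ≤ c) : ∫ x, f x ∂μ ≤ c := by
  have hint : Integrable f μ := (integrable_const M).mono' hf hM
  simpa using integral_mono_ae hint (integrable_const c) hc

lemma memU0.integral_le {r0 Ω H R0 : ℝ} {Δ : Set (ℝ × ℝ)} {P Ψ : ℝ × ℝ → ℝ}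
    (hU : memU0 r0 H Δ P Ψ) (hP0 : P (0, 0) = 0) (hr0 : r0 ≠ 0) (hΩ : 0 ≤ Ω) (hH : 0 ≤ H)
    (hΔ : Δ ⊆ Set.Icc (0, 0) (R0, R0)) (σ : Measure (ℝ × ℝ)) [IsProbabilityMeasure σ]
    (hσΔ : ∀ᵐ q ∂σ, q ∈ Δ) (lam : ℝ) :
    ∫ q, (q.1 / (2 * r0 ^ 2) - Ω * Real.sqrt q.1 - (Ψ q + lam)) ∂σ ≤ R0 / (2 * r0 ^ 2) - lam := by
  obtain ⟨Ψ', hΨ', hΨΨ'⟩ := hU.exists_measurable_eqOn_psi hP0 hr0 hH hΔ hσΔ.exists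
  have hbounds : ∀ᵐ q ∂σ, (0 ≤ Ψ q ∧ Ψ q ≤ R0 * (1 / (2 * r0 ^ 2) + H) + 1) ∧
      (0 ≤ q.1 / (2 * r0 ^ 2) ∧ q.1 / (2 * r0 ^ 2) ≤ R0 / (2 * r0 ^ 2)) ∧
      (0 ≤ Ω * Real.sqrt q.1 ∧ Ω * Real.sqrt q.1 ≤ Ω * Real.sqrt R0) := by
    filter_upwards [hσΔ] with q hq
    obtain ⟨⟨hq1, hq2⟩, hq1', -⟩ := hΔ hq
    exact ⟨⟨hU.psi_nonneg hP0 hr0 hH hq1 hq2, hU.psi_le hP0 hr0 hH hΔ ⟨q, hq⟩ (hΔ hq)⟩,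
      ⟨by positivity, by gcongr⟩, ⟨by positivity, by gcongr⟩⟩
  refine integral_le_of_ae_le (M := R0 / (2 * r0 ^ 2) + Ω * Real.sqrt R0 +
      (R0 * (1 / (2 * r0 ^ 2) + H) + 1) + |lam|) ?_ ?_ ?_
  · refine Measurable.aestronglyMeasurable (f := fun q : ℝ × ℝ =>
      q.1 / (2 * r0 ^ 2) - Ω * Real.sqrt q.1 - (Ψ' q + lam)) (by fun_prop) |>.congr ?_
    filter_upwards [hσΔ] with q hq
    rw [hΨΨ' q (hΔ hq).1.1 (hΔ hq).1.2]
  · filter_upwards [hbounds] with q ⟨⟨_, _⟩, ⟨_, _⟩, ⟨_, _⟩⟩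
    rw [abs_le]
    constructor <;> linarith [neg_abs_le lam, le_abs_self lam]
  · filter_upwards [hbounds] with q ⟨⟨_, _⟩, ⟨_, _⟩, ⟨_, _⟩⟩
    linarith

/-- Chosen so that `H r0⁴ ρ / (1 - 2ρr0²) = 2`, i.e. `H Π_C(ρ, z)` has slope `-2` in `C`. -/
noncomputable def testDensity (r0 H : ℝ) : ℝ := 2 / (r0 ^ 2 * (H * r0 ^ 2 + 4))

lemma testDensity_mem {r0 H : ℝ} (hr0 : r0 ≠ 0) (hH : 0 < H) :
    testDensity r0 H ∈ Set.Ico 0 (1 / (2 * r0 ^ 2)) := by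
  refine ⟨by unfold testDensity; positivity, ?_⟩
  unfold testDensity
  rw [div_lt_div_iff₀ (by positivity) (by positivity)]
  have : 0 < H * r0 ^ 2 * r0 ^ 2 := by positivity
  linarith

lemma mul_PiFun_const_testDensity (Ω C z : ℝ) {r0 H : ℝ} (hr0 : r0 ≠ 0) (hH : 0 < H) :
    H * PiFun r0 Ω (fun _ => C) (testDensity r0 H) z
      = H * PiFun r0 Ω (fun _ => 0) (testDensity r0 H) z - 2 * C := by
  have hρ := two_mul_mul_sq_lt_one (testDensity_mem hr0 hH).2
  have hu : 1 - 2 * testDensity r0 H * r0 ^ 2 = H * r0 ^ 2 / (H * r0 ^ 2 + 4) := by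
    unfold testDensity; field_simp; ring
  rw [PiFun_const r0 Ω C z hρ, PiFun_const r0 Ω 0 z hρ]
  unfold piPrimitive
  rw [hu]
  field_simp
  ring

theorem stmt17_general (r0 Ω H R0 C₀ : ℝ) (hr0 : 0 < r0) (hΩ : 0 < Ω) (hH : 0 < H) :
    ∃ C₁ : ℝ, ∀ (Δ : Set (ℝ × ℝ)), IsClosed Δ → Δ ⊆ Set.Icc (0, 0) (R0, R0) →
      ∀ (σ : Measure (ℝ × ℝ)), IsProbabilityMeasure σ → σ Δᶜ = 0 →
      ∀ (P Ψ : ℝ × ℝ → ℝ), memU0 r0 H Δ P Ψ → P (0, 0) = 0 →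
      ∀ lam : ℝ,
        -C₀ ≤ Jfun r0 Ω H σ (fun q => Ψ q + lam) (fun p => P p - lam) →
        |lam| ≤ C₁ := by
  set A := H * PiFun r0 Ω (fun _ => 0) (testDensity r0 H) 0
  refine ⟨|C₀ + R0 / (2 * r0 ^ 2)| + |A| + 2, ?_⟩
  intro Δ _ hΔ σ _ hσΔ P Ψ hU hP0 lam hJ
  have hae : ∀ᵐ q ∂σ, q ∈ Δ := ae_iff.2 hσΔ
  obtain ⟨Q, hQ, hQlo, hQhi, hPQ⟩ :=
    hU.exists_measurable_eqOn_Dom hP0 hr0.ne' hH.le hΔ hae.exists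
  have hlo : ∀ p, -1 - lam ≤ Q p - lam := fun p => by linarith [hQlo p]
  have hhi : ∀ p, Q p - lam ≤ R0 * (1 / (2 * r0 ^ 2) + H) - lam := fun p => by linarith [hQhi p]
  have hjP : jP r0 Ω H (fun p => P p - lam) = jP r0 Ω H (fun p => Q p - lam) :=
    jP_congr hH.le fun p hp => by rw [hPQ p hp]
  have hj0 := jP_le_mul_PiFun_const hΩ.ne' hH.le (hQ.sub_const lam) hlo hhi
    (⟨le_rfl, by positivity⟩ : (0 : ℝ) ∈ Set.Ico 0 (1 / (2 * r0 ^ 2)))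
  have hjρ := jP_le_mul_PiFun_const hΩ.ne' hH.le (hQ.sub_const lam) hlo hhi
    (testDensity_mem hr0.ne' hH)
  rw [mul_PiFun_const_testDensity Ω _ _ hr0.ne' hH] at hjρ
  simp only [PiFun, intervalIntegral.integral_same, mul_zero] at hj0
  have hI := hU.integral_le hP0 hr0.ne' hΩ.le hH.le hΔ σ hae lam
  rw [Jfun, hjP] at hJ
  rw [abs_le]
  constructor <;> linarith [le_abs_self (C₀ + R0 / (2 * r0 ^ 2)), neg_abs_le A,
    abs_nonneg (C₀ + R0 / (2 * r0 ^ 2)), le_abs_self A, abs_nonneg A]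

/-- normalization bound on the additive constant: for fixed `C₀` there is `C₁`
such that for every `(P,Ψ) ∈ 𝒰₀` with `P(0,0) = 0`, every `λ ∈ ℝ` and every Borel probability
measure `σ` supported in `[0,R₀]²`, `J[σ](Ψ+λ, P−λ) ≥ −C₀` implies `|λ| ≤ C₁`. -/
theorem stmt17 (r0 Ω H R0 C₀ : ℝ) (hr0 : 0 < r0) (hΩ : 0 < Ω) (hH : 0 < H) (hR0 : 1 < R0) :
    ∃ C₁ : ℝ, ∀ (Δ : Set (ℝ × ℝ)), IsClosed Δ → Δ ⊆ Set.Icc (0, 0) (R0, R0) →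
      ∀ (σ : Measure (ℝ × ℝ)), IsProbabilityMeasure σ → σ Δᶜ = 0 →
      ∀ (P Ψ : ℝ × ℝ → ℝ), memU0 r0 H Δ P Ψ → P (0, 0) = 0 →
      ∀ lam : ℝ,
        -C₀ ≤ Jfun r0 Ω H σ (fun q => Ψ q + lam) (fun p => P p - lam) →
        |lam| ≤ C₁ :=
  stmt17_general r0 Ω H R0 C₀ hr0 hΩ hH
end
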